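/- arXiv:2007.13330 — 5 statements merged into one kernel-verified Lean document; each statement's English description precedes it below -/
import Mathlib

section
/- For all integers m > n ≥ 1, the greatest common divisor gcd(Φ_m, Φ_n) divides m. -/
open Real Complex

/-- `Φₙ := ∏_{1 ≤ k ≤ n, gcd(n,k) = 1} (α − e^{2πik/n} β)` for `n ≥ 2`, and `Φ₁ := 1`,
where `α = (1 + √5)/2` and `β = (1 − √5)/2`. -/
noncomputable def PhiFib (n : ℕ) : ℂ :=
  if n = 1 then 1
  else ∏ k ∈ (Finset.Icc 1 n).filter (fun k => Nat.gcd n k = 1),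
    ((((1 + Real.sqrt 5) / 2 : ℝ) : ℂ) -
      Complex.exp (2 * Real.pi * Complex.I * k / n) * (((1 - Real.sqrt 5) / 2 : ℝ) : ℂ))

/-!
Work in `ℤ[φ] = QuadraticAlgebra ℤ 1 1`, embedded in `ℂ` by `ω ↦ φ`. Since `φ = -φ² ψ`,
homogenising the `k`-th cyclotomic polynomial `Ψₖ` gives `Φₖ = ψ ^ N · Ψₖ(-φ²)` for `k ≥ 2`,
and `ψ = 1 - φ` is a unit. So a common divisor `d` of `Φₘ` and `Φₙ` makes `x = -φ²` a common
root of `Ψₘ` and `Ψₙ` in `ℤ[φ] ⧸ (d)`. There `xᵐ = xⁿ = 1`, so `x ^ g = 1` for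
`g = gcd(m, n) < m`, and evaluating `Ψₘ ∣ ∑_{i < m/g} X ^ (g i)` at `x` gives `m / g = 0`.
Hence `d ∣ m` in `ℤ[φ]`, hence in `ℤ`.
-/

open Finset Polynomial

namespace Polynomial

theorem cyclotomic_dvd_geom_sum_X_pow (R : Type*) [CommRing R] {g m : ℕ}
    (hg : g ∈ m.properDivisors) : cyclotomic m R ∣ ∑ i ∈ range (m / g), (X ^ g) ^ i := by
  suffices cyclotomic m ℤ ∣ ∑ i ∈ range (m / g), (X ^ g) ^ i by
    simpa only [map_cyclotomic_int, Polynomial.map_sum, Polynomial.map_pow, Polynomial.map_X]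
      using map_dvd (Int.castRingHom R) this
  obtain ⟨hgm, hlt⟩ := Nat.mem_properDivisors.mp hg
  have hg0 : (X ^ g - 1 : ℤ[X]) ≠ 0 :=
    X_pow_sub_C_ne_zero (Nat.pos_of_dvd_of_pos hgm (by omega)) 1
  rw [← mul_dvd_mul_iff_left hg0, mul_geom_sum, ← pow_mul, Nat.mul_div_cancel' hgm]
  exact X_pow_sub_one_mul_cyclotomic_dvd_X_pow_sub_one_of_dvd ℤ hg

theorem natCast_eq_zero_of_isRoot_cyclotomic {R : Type*} [CommRing R] {m n : ℕ} {x : R}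
    (hn : 0 < n) (hnm : n < m) (hxm : (cyclotomic m R).IsRoot x)
    (hxn : (cyclotomic n R).IsRoot x) : (m : R) = 0 := by
  have hpow (k : ℕ) (hk : (cyclotomic k R).IsRoot x) : x ^ k = 1 := by
    simpa [sub_eq_zero] using hk.dvd (cyclotomic.dvd_X_pow_sub_one k R)
  set g := m.gcd n
  have hxg : x ^ g = 1 := pow_gcd_eq_one.mpr ⟨hpow m hxm, hpow n hxn⟩
  have hg : g ∈ m.properDivisors := Nat.mem_properDivisors.mpr
    ⟨Nat.gcd_dvd_left m n, (Nat.gcd_le_right m hn).trans_lt hnm⟩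
  have hquot : ((m / g : ℕ) : R) = 0 := by
    have := (hxm.dvd (cyclotomic_dvd_geom_sum_X_pow R hg)).eq_zero
    simpa only [eval_finsetSum, eval_pow, eval_X, hxg, one_pow, sum_const, card_range,
      nsmul_one] using this
  rw [← Nat.div_mul_cancel (Nat.gcd_dvd_left m n), Nat.cast_mul, hquot, zero_mul]

theorem dvd_natCast_of_dvd_eval_cyclotomic {R : Type*} [CommRing R] {m n : ℕ} {x d : R}
    (hn : 0 < n) (hnm : n < m) (hdm : d ∣ (cyclotomic m R).eval x)
    (hdn : d ∣ (cyclotomic n R).eval x) : d ∣ (m : R) := by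
  have hroot (k : ℕ) (hk : d ∣ (cyclotomic k R).eval x) :
      (cyclotomic k (R ⧸ Ideal.span {d})).IsRoot (Ideal.Quotient.mk _ x) := by
    rwa [IsRoot, ← map_cyclotomic k (Ideal.Quotient.mk _), eval_map_apply,
      Ideal.Quotient.eq_zero_iff_dvd]
  rw [← Ideal.Quotient.eq_zero_iff_dvd, map_natCast]
  exact natCast_eq_zero_of_isRoot_cyclotomic hn hnm (hroot m hdm) (hroot n hdn)

theorem prod_primitiveRoots_mul_sub_mul {K : Type*} [CommRing K] [IsDomain K] {ζ : K} {k : ℕ}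
    (hζ : IsPrimitiveRoot ζ k) (x b : K) :
    ∏ μ ∈ primitiveRoots k K, (x * b - μ * b) =
      b ^ #(primitiveRoots k K) * (cyclotomic k K).eval x := by
  rw [cyclotomic_eq_prod_X_sub_primitiveRoots hζ, eval_prod, ← prod_const, ← prod_mul_distrib]
  refine prod_congr rfl fun μ _ => ?_
  simp only [eval_sub, eval_X, eval_C]
  ring

end Polynomial

open QuadraticAlgebra

theorem QuadraticAlgebra.natCast_dvd_natCast {a b : ℤ} {d m : ℕ} :
    (d : QuadraticAlgebra ℤ a b) ∣ (m : QuadraticAlgebra ℤ a b) ↔ d ∣ m := by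
  rw [← map_natCast (algebraMap ℤ _), ← map_natCast (algebraMap ℤ _) m, algebraMap_dvd_iff_dvd,
    Int.natCast_dvd_natCast]

noncomputable def goldenEmbedding : QuadraticAlgebra ℤ 1 1 →ₐ[ℤ] ℂ :=
  QuadraticAlgebra.lift ⟨(goldenRatio : ℂ), by
    rw [one_smul, one_smul, ← sq]
    exact_mod_cast goldenRatio_sq.trans (add_comm _ _)⟩

theorem goldenEmbedding_apply (z : QuadraticAlgebra ℤ 1 1) :
    goldenEmbedding z = ((z.re + z.im * goldenRatio : ℝ) : ℂ) := by
  simp [goldenEmbedding]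

theorem goldenEmbedding_omega : goldenEmbedding ω = goldenRatio := by
  simp [goldenEmbedding_apply]

theorem goldenEmbedding_injective : Function.Injective goldenEmbedding := by
  refine (injective_iff_map_eq_zero _).mpr fun z hz => ?_
  rw [goldenEmbedding_apply, Complex.ofReal_eq_zero] at hz
  have him : z.im = 0 := by
    by_contra h
    exact ((goldenRatio_irrational.intCast_mul h).intCast_add z.re).ne_zero hz
  ext
  · simpa [him] using hz
  · exact him

theorem isUnit_one_sub_omega : IsUnit (1 - ω : QuadraticAlgebra ℤ 1 1) :=
  IsUnit.of_mul_eq_one (-ω) (by ext <;> simp)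

theorem Complex.prod_coprime_exp_eq_prod_primitiveRoots {M : Type*} [CommMonoid M] (f : ℂ → M)
    {k : ℕ} (hk : 1 < k) :
    ∏ j ∈ (Icc 1 k).filter (fun j => Nat.gcd k j = 1), f (exp (2 * π * I * j / k)) =
      ∏ μ ∈ primitiveRoots k ℂ, f μ := by
  have hk0 : k ≠ 0 := by omega
  have hmem {j : ℕ} (hj : j ∈ (Icc 1 k).filter (fun j => Nat.gcd k j = 1)) :
      j < k ∧ j.Coprime k := by
    obtain ⟨hjk, hgcd⟩ := mem_filter.mp hj
    refine ⟨lt_of_le_of_ne (mem_Icc.mp hjk).2 ?_, Nat.coprime_comm.mp hgcd⟩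
    rintro rfl
    rw [Nat.gcd_self] at hgcd
    omega
  have hexp (j : ℕ) : exp (2 * π * I * j / k) = exp (2 * π * I / k) ^ j := by
    rw [← Complex.exp_nat_mul]
    ring_nf
  refine prod_bij (fun j _ => exp (2 * π * I * j / k)) (fun j hj => ?_) (fun a ha b hb hab => ?_)
    (fun μ hμ => ?_) (fun _ _ => rfl)
  · rw [mem_primitiveRoots (by omega), mul_div_assoc]
    exact isPrimitiveRoot_exp_of_coprime j k hk0 (hmem hj).2
  · simp only [hexp] at hab
    exact (isPrimitiveRoot_exp k hk0).pow_inj (hmem ha).1 (hmem hb).1 hab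
  · obtain ⟨i, hik, hcop, rfl⟩ :=
      (isPrimitiveRoot_iff μ k hk0).mp ((mem_primitiveRoots (by omega)).mp hμ)
    have hi0 : i ≠ 0 := by
      rintro rfl
      exact hk.ne' (Nat.coprime_zero_left k |>.mp hcop)
    refine ⟨i, mem_filter.mpr ⟨mem_Icc.mpr ⟨by omega, hik.le⟩, Nat.coprime_comm.mp hcop⟩, ?_⟩
    rw [mul_div_assoc]

theorem PhiFib_eq_prod_primitiveRoots {k : ℕ} (hk : 1 < k) :
    PhiFib k = ∏ μ ∈ primitiveRoots k ℂ, ((goldenRatio : ℂ) - μ * goldenConj) := by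
  rw [PhiFib, if_neg hk.ne']
  exact Complex.prod_coprime_exp_eq_prod_primitiveRoots
    (fun μ => (goldenRatio : ℂ) - μ * goldenConj) hk

theorem PhiFib_eq_goldenEmbedding {k : ℕ} (hk : 1 < k) :
    PhiFib k = goldenEmbedding ((1 - ω) ^ #(primitiveRoots k ℂ) *
      (cyclotomic k (QuadraticAlgebra ℤ 1 1)).eval (-(ω * ω))) := by
  have hφ : (goldenRatio : ℂ) = -(goldenRatio * goldenRatio) * goldenConj := by
    exact_mod_cast (by rw [neg_mul, mul_assoc, goldenRatio_mul_goldenConj, mul_neg_one, neg_neg] :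
      goldenRatio = -(goldenRatio * goldenRatio) * goldenConj)
  have hcyc (x : QuadraticAlgebra ℤ 1 1) : goldenEmbedding ((cyclotomic k _).eval x) =
      (cyclotomic k ℂ).eval (goldenEmbedding x) := by
    rw [← map_cyclotomic k (goldenEmbedding : QuadraticAlgebra ℤ 1 1 →+* ℂ)]
    exact (eval_map_apply (goldenEmbedding : QuadraticAlgebra ℤ 1 1 →+* ℂ) x).symm
  rw [PhiFib_eq_prod_primitiveRoots hk, hφ, map_mul, map_pow, hcyc, map_sub, map_one, map_neg,
    map_mul, goldenEmbedding_omega,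
    ← prod_primitiveRoots_mul_sub_mul (isPrimitiveRoot_exp k (by omega)), ← ofReal_one,
    ← ofReal_sub, one_sub_goldenConj]

/-- Each `Φₙ` is a (positive) integer, and for all integers `m > n ≥ 1` the
greatest common divisor `gcd(Φₘ, Φₙ)` divides `m`. Here `A n` is the natural number whose value
is `Φₙ`. -/
theorem gcd_PhiFib_dvd
    (A : ℕ → ℕ) (hA : ∀ n, 1 ≤ n → (A n : ℂ) = PhiFib n)
    (m n : ℕ) (hn : 1 ≤ n) (hmn : n < m) :
    Nat.gcd (A m) (A n) ∣ m := by
  obtain rfl | hn1 := hn.eq_or_lt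
  · have hA1 : A 1 = 1 := by exact_mod_cast (hA 1 le_rfl).trans (if_pos rfl)
    simp [hA1]
  have hdvd_eval {k : ℕ} (hk : 1 < k) (hd : Nat.gcd (A m) (A n) ∣ A k) :
      (Nat.gcd (A m) (A n) : QuadraticAlgebra ℤ 1 1) ∣
        (cyclotomic k (QuadraticAlgebra ℤ 1 1)).eval (-(ω * ω)) := by
    have hAk : (A k : QuadraticAlgebra ℤ 1 1) = (1 - ω) ^ #(primitiveRoots k ℂ) *
        (cyclotomic k (QuadraticAlgebra ℤ 1 1)).eval (-(ω * ω)) :=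
      goldenEmbedding_injective (by rw [map_natCast, hA k hk.le, PhiFib_eq_goldenEmbedding hk])
    rw [← (isUnit_one_sub_omega.pow _).dvd_mul_left, ← hAk]
    exact Nat.cast_dvd_cast hd
  exact QuadraticAlgebra.natCast_dvd_natCast.mp <| dvd_natCast_of_dvd_eval_cyclotomic (by omega)
    hmn (hdvd_eval (by omega) (Nat.gcd_dvd_left _ _)) (hdvd_eval hn1 (Nat.gcd_dvd_right _ _))
end

section
/- For all integers m, n ≥ 1, the greatest common divisor gcd(F_m, L_n) equals 1, or equals 2, or equals L_{gcd(m, n)}. -/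
/-!
Write `m = a g`, `n = b g` with `g = gcd(m, n)` and `a`, `b` coprime. Since `F_{2n} = F_n L_n`, the
gcd `d = gcd(F_m, L_n)` divides `gcd(F_m, F_{2n}) = F_{gcd(m, 2n)} = F_{gcd(a, 2) g}`, and
`gcd(F_k, L_k) ∣ 2` because `L_k + F_k = 2 F_{k+1}` with `F_{k+1}` coprime to `F_k`.

If `a` is odd, then `d ∣ F_g ∣ F_n`, so `d ∣ gcd(F_n, L_n) ∣ 2`. If `a` is even, then `b` is odd, so
`L_g` divides both `F_{2g} ∣ F_m` and `L_{bg} = L_n`; on the other hand `d ∣ F_{2g} = F_g L_g` with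
`gcd(F_g, L_n) ∣ 2`, so `d` is `L_g` or `2 L_g`. The second case would make `d` even, forcing
`3 ∣ m`, `3 ∣ n`, hence `3 ∣ g` and `n ≡ g (mod 6)`; but for indices divisible by 3 the residue of
`L_k` mod 8 is 2 or 4 and depends only on `k` mod 6, so `L_n` and `L_g` carry the same power of 2.
-/

/-- The Lucas numbers: `L₁ = 1`, `L₂ = 3`, `L_{n+2} = L_{n+1} + L_n` (with `L₀ = 2`). -/
def lucas : ℕ → ℕ
  | 0 => 2
  | 1 => 1
  | n + 2 => lucas (n + 1) + lucas n

open Nat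

theorem lucas_add_two (n : ℕ) : lucas (n + 2) = lucas (n + 1) + lucas n := rfl

theorem lucas_pos : ∀ n, 0 < lucas n
  | 0 | 1 => by decide
  | n + 2 => by rw [lucas_add_two]; exact Nat.add_pos_right _ (lucas_pos n)

theorem lucas_add_fib : ∀ n, lucas n + fib n = 2 * fib (n + 1)
  | 0 | 1 => rfl
  | n + 2 => by
    have h₀ := lucas_add_fib n
    have h₁ := lucas_add_fib (n + 1)
    rw [lucas_add_two, fib_add_two, fib_add_two (n := n + 1)]
    omega

theorem fib_two_mul_eq_fib_mul_lucas (n : ℕ) : fib (2 * n) = fib n * lucas n := by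
  rw [fib_two_mul]
  have := lucas_add_fib n
  congr 1
  omega

theorem lucas_dvd_fib_two_mul (n : ℕ) : lucas n ∣ fib (2 * n) :=
  fib_two_mul_eq_fib_mul_lucas n ▸ dvd_mul_left _ _

theorem gcd_fib_lucas_self_dvd_two (n : ℕ) : Nat.gcd (fib n) (lucas n) ∣ 2 := by
  have hcop : Coprime (Nat.gcd (fib n) (lucas n)) (fib (n + 1)) :=
    (fib_coprime_fib_succ n).coprime_dvd_left (Nat.gcd_dvd_left _ _)
  refine hcop.dvd_of_dvd_mul_right ?_
  rw [← lucas_add_fib]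
  exact dvd_add (Nat.gcd_dvd_right _ _) (Nat.gcd_dvd_left _ _)

theorem lucas_add (m n : ℕ) :
    lucas (m + n + 1) = lucas m * fib n + lucas (m + 1) * fib (n + 1) := by
  induction n generalizing m with
  | zero => simp
  | succ n ih =>
    specialize ih (m + 1)
    rw [add_assoc m 1 n, add_comm 1 n] at ih
    simp only [fib_add_two, lucas_add_two, ih]
    ring

theorem lucas_dvd_lucas_add {m n : ℕ} (h : lucas m ∣ fib n) : lucas m ∣ lucas (m + n) := by
  cases n with
  | zero => rfl
  | succ n =>
    rw [← add_assoc, lucas_add]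
    exact dvd_add (dvd_mul_right _ _) (dvd_mul_of_dvd_right h _)

theorem lucas_dvd_lucas_mul_of_odd {b : ℕ} (hb : Odd b) (g : ℕ) : lucas g ∣ lucas (b * g) := by
  obtain ⟨k, rfl⟩ := hb
  rw [show (2 * k + 1) * g = g + 2 * g * k by ring]
  exact lucas_dvd_lucas_add ((lucas_dvd_fib_two_mul g).trans (fib_dvd _ _ (dvd_mul_right _ _)))

theorem fib_add_three (n : ℕ) : fib (n + 3) = 2 * fib (n + 1) + fib n := by
  rw [fib_add_two, fib_add_two (n := n)]
  ring

theorem two_dvd_fib_iff : ∀ n, 2 ∣ fib n ↔ 3 ∣ n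
  | 0 | 1 | 2 => by decide
  | n + 3 => by
    have := two_dvd_fib_iff n
    rw [fib_add_three]
    omega

theorem two_dvd_lucas_iff (n : ℕ) : 2 ∣ lucas n ↔ 3 ∣ n := by
  have := lucas_add_fib n
  rw [← two_dvd_fib_iff]
  omega

theorem lucas_add_six (n : ℕ) : lucas (n + 6) = 4 * lucas (n + 3) + lucas n := by
  simp only [lucas_add_two]
  omega

theorem lucas_mod_eight_of_three_dvd : ∀ n, 3 ∣ n → lucas n % 8 = lucas (n % 6) % 8
  | 0, _ | 1, _ | 2, _ | 3, _ | 4, _ | 5, _ => rfl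
  | n + 6, h => by
    have ih := lucas_mod_eight_of_three_dvd n (by omega)
    have heven := (two_dvd_lucas_iff (n + 3)).2 (by omega)
    rw [lucas_add_six, show (n + 6) % 6 = n % 6 by omega]
    omega

theorem not_two_mul_lucas_dvd_lucas {g n : ℕ} (hg : 3 ∣ g) (hn : n ≡ g [MOD 6]) :
    ¬ 2 * lucas g ∣ lucas n := by
  unfold Nat.ModEq at hn
  have hL : lucas n % 8 = lucas g % 8 := by
    rw [lucas_mod_eight_of_three_dvd n (by omega), lucas_mod_eight_of_three_dvd g hg, hn]
  intro hdvd
  rcases (show g % 6 = 0 ∨ g % 6 = 3 by omega) with h | h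
  · have hg8 : lucas g % 8 = 2 := by rw [lucas_mod_eight_of_three_dvd g hg, h]; rfl
    have := (show 4 ∣ 2 * lucas g by omega).trans hdvd
    omega
  · have hg8 : lucas g % 8 = 4 := by rw [lucas_mod_eight_of_three_dvd g hg, h]; rfl
    have := (show 8 ∣ 2 * lucas g by omega).trans hdvd
    omega

theorem gcd_fib_lucas_dvd_fib_gcd (m n : ℕ) :
    Nat.gcd (fib m) (lucas n) ∣ fib (Nat.gcd m (2 * n)) := by
  rw [fib_gcd]
  exact Nat.gcd_dvd_gcd_of_dvd_right _ (lucas_dvd_fib_two_mul n)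

theorem Nat.Coprime.gcd_mul_two_mul_mul {a b : ℕ} (hab : Coprime a b) (g : ℕ) :
    Nat.gcd (a * g) (2 * (b * g)) = Nat.gcd a 2 * g := by
  rw [← mul_assoc, Nat.gcd_mul_right, hab.symm.gcd_mul_right_cancel_right]

theorem gcd_fib_mul_lucas_mul_dvd_two {a b : ℕ} (hab : Coprime a b) (g : ℕ) (ha : Odd a) :
    Nat.gcd (fib (a * g)) (lucas (b * g)) ∣ 2 := by
  have hd := gcd_fib_lucas_dvd_fib_gcd (a * g) (b * g)
  rw [hab.gcd_mul_two_mul_mul, coprime_two_right.2 ha, one_mul] at hd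
  exact (Nat.dvd_gcd (hd.trans (fib_dvd _ _ (dvd_mul_left g b))) (Nat.gcd_dvd_right _ _)).trans
    (gcd_fib_lucas_self_dvd_two _)

theorem not_two_mul_lucas_dvd_gcd_fib_mul_lucas_mul {a b : ℕ} (hab : Coprime a b) (g : ℕ)
    (hb : Odd b) :
    ¬ 2 * lucas g ∣ Nat.gcd (fib (a * g)) (lucas (b * g)) := by
  intro h
  have h2 : 2 ∣ Nat.gcd (fib (a * g)) (lucas (b * g)) := (dvd_mul_right 2 _).trans h
  have h3g : 3 ∣ g := by
    have := Nat.dvd_gcd ((two_dvd_fib_iff _).1 (h2.trans (Nat.gcd_dvd_left _ _)))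
      ((two_dvd_lucas_iff _).1 (h2.trans (Nat.gcd_dvd_right _ _)))
    rwa [Nat.gcd_mul_right, hab.gcd_eq_one, one_mul] at this
  refine not_two_mul_lucas_dvd_lucas h3g ?_ (h.trans (Nat.gcd_dvd_right _ _))
  obtain ⟨k, rfl⟩ := hb
  obtain ⟨j, rfl⟩ := h3g
  rw [Nat.ModEq, show (2 * k + 1) * (3 * j) = 3 * j + 6 * (k * j) by ring]
  exact Nat.add_mul_mod_self_left _ _ _

theorem gcd_fib_mul_lucas_mul_eq_lucas {a b : ℕ} (hab : Coprime a b) (g : ℕ) (ha : Even a) :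
    Nat.gcd (fib (a * g)) (lucas (b * g)) = lucas g := by
  have hb : Odd b := (hab.coprime_dvd_left ha.two_dvd).odd_of_left
  have hLd : lucas g ∣ Nat.gcd (fib (a * g)) (lucas (b * g)) :=
    Nat.dvd_gcd ((lucas_dvd_fib_two_mul g).trans (fib_dvd _ _ (mul_dvd_mul_right ha.two_dvd g)))
      (lucas_dvd_lucas_mul_of_odd hb g)
  have hd2L : Nat.gcd (fib (a * g)) (lucas (b * g)) ∣ lucas g * 2 := by
    have hd := gcd_fib_lucas_dvd_fib_gcd (a * g) (b * g)
    rw [hab.gcd_mul_two_mul_mul, Nat.gcd_eq_right ha.two_dvd,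
      fib_two_mul_eq_fib_mul_lucas] at hd
    have hFg : Nat.gcd (fib g) (lucas (b * g)) ∣ 2 :=
      (Nat.gcd_dvd_gcd_of_dvd_left _ (fib_dvd _ _ (dvd_mul_left g b))).trans
        (gcd_fib_lucas_self_dvd_two _)
    have := Nat.dvd_gcd hd ((Nat.gcd_dvd_right _ _).mul_right (lucas g))
    rw [Nat.gcd_mul_right] at this
    rw [mul_comm (lucas g) 2]
    exact this.trans (mul_dvd_mul_right hFg _)
  obtain ⟨c, hc⟩ := hLd
  rw [hc] at hd2L ⊢
  have hc2 : c ∣ 2 := (Nat.mul_dvd_mul_iff_left (lucas_pos g)).1 hd2L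
  rcases (Nat.dvd_prime prime_two).1 hc2 with rfl | rfl
  · exact mul_one _
  · exact (not_two_mul_lucas_dvd_gcd_fib_mul_lucas_mul hab g hb (by rw [hc, mul_comm])).elim

theorem gcd_fib_lucas_general (m n : ℕ) :
    Nat.gcd (Nat.fib m) (lucas n) = 1 ∨
    Nat.gcd (Nat.fib m) (lucas n) = 2 ∨
    Nat.gcd (Nat.fib m) (lucas n) = lucas (Nat.gcd m n) := by
  obtain ⟨a, b, hab, hm, hn⟩ := Nat.exists_coprime m n
  rcases Nat.even_or_odd a with ha | ha
  · have := gcd_fib_mul_lucas_mul_eq_lucas hab (Nat.gcd m n) ha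
    rw [← hm, ← hn] at this
    exact Or.inr (Or.inr this)
  · have := gcd_fib_mul_lucas_mul_dvd_two hab (Nat.gcd m n) ha
    rw [← hm, ← hn] at this
    exact (Nat.dvd_prime prime_two).1 this |>.imp_right Or.inl

/-- For all `m, n ≥ 1`, `gcd(F_m, L_n)` equals `1`, `2`, or `L_{gcd(m,n)}`. -/
theorem gcd_fib_lucas (m n : ℕ) (hm : 1 ≤ m) (hn : 1 ≤ n) :
    Nat.gcd (Nat.fib m) (lucas n) = 1 ∨
    Nat.gcd (Nat.fib m) (lucas n) = 2 ∨
    Nat.gcd (Nat.fib m) (lucas n) = lucas (Nat.gcd m n) :=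
  gcd_fib_lucas_general m n
end

section
/- Let r, m be positive integers, let S be the set of s ∈ {1, ..., m} such that there exists an integer t ≥ 1 with s·t ≡ r (mod m), and for each s ∈ S let t(s) be the minimal such t. Then for all real x ≥ 1, ⋃_{n ∈ A_{r,m}(x)} D(n) = ⋃_{s ∈ S} A_{s,m}(x / t(s)). -/
/-- `A_{r,m}(x) := {n ≥ 1 : n ≤ x and n ≡ r (mod m)}`. -/
def Aset (r m : ℕ) (x : ℝ) : Set ℕ :=
  {n | 0 < n ∧ (n : ℝ) ≤ x ∧ n ≡ r [MOD m]}

/-! A divisor `d` of `n = d t' ∈ A_{r,m}(x)` has a residue `s ∈ {1, …, m}`, and `t'` witnesses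
`s ∈ S`; minimality gives `d t(s) ≤ d t' ≤ x`, so `d ∈ A_{s,m}(x / t(s))`. Conversely, for
`d ∈ A_{s,m}(x / t(s))` the multiple `d t(s)` lies in `A_{r,m}(x)`. -/

theorem Nat.exists_modEq_mem_Icc {m : ℕ} (hm : 0 < m) (d : ℕ) :
    ∃ s ∈ Set.Icc 1 m, s ≡ d [MOD m] := by
  rcases eq_or_ne (d % m) 0 with h | h
  · exact ⟨m, ⟨hm, le_rfl⟩, by simp [Nat.ModEq, h]⟩
  · exact ⟨d % m, ⟨Nat.one_le_iff_ne_zero.mpr h, (Nat.mod_lt d hm).le⟩, Nat.mod_modEq d m⟩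

theorem mem_Aset_div_iff {s m t d : ℕ} {x : ℝ} (ht : 0 < t) :
    d ∈ Aset s m (x / t) ↔ 0 < d ∧ ((d * t : ℕ) : ℝ) ≤ x ∧ d ≡ s [MOD m] := by
  rw [Aset, Set.mem_ofPred_eq, le_div_iff₀ (by exact_mod_cast ht), Nat.cast_mul]

theorem mul_mem_Aset {r s m t d : ℕ} {x : ℝ} (ht : 0 < t) (hst : s * t ≡ r [MOD m])
    (hd : d ∈ Aset s m (x / t)) : d * t ∈ Aset r m x := by
  obtain ⟨hd, hdx, hds⟩ := (mem_Aset_div_iff ht).mp hd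
  exact ⟨Nat.mul_pos hd ht, hdx, (hds.mul_right t).trans hst⟩

theorem mem_Aset_div_of_mul_mem {r s m t t' d : ℕ} {x : ℝ} (ht : 0 < t) (hle : t ≤ t')
    (hds : d ≡ s [MOD m]) (hd : d * t' ∈ Aset r m x) : d ∈ Aset s m (x / t) := by
  obtain ⟨hpos, hx, -⟩ := hd
  refine (mem_Aset_div_iff ht).mpr ⟨Nat.pos_of_mul_pos_right hpos, ?_, hds⟩
  calc ((d * t : ℕ) : ℝ) ≤ ((d * t' : ℕ) : ℝ) := by gcongr
    _ ≤ x := hx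

theorem union_divisors_Aset_general
    (r m : ℕ) (hm : 0 < m)
    (S : Set ℕ) (hS : S = {s | 1 ≤ s ∧ s ≤ m ∧ ∃ t, 1 ≤ t ∧ s * t ≡ r [MOD m]})
    (t : ℕ → ℕ)
    (ht : ∀ s ∈ S, 1 ≤ t s ∧ s * t s ≡ r [MOD m] ∧
      ∀ t', 1 ≤ t' → s * t' ≡ r [MOD m] → t s ≤ t')
    (x : ℝ) :
    (⋃ n ∈ Aset r m x, {d : ℕ | d ∣ n}) = ⋃ s ∈ S, Aset s m (x / t s) := by
  ext d
  simp only [Set.mem_iUnion, Set.mem_ofPred_eq, exists_prop]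
  constructor
  · rintro ⟨_, hn, t', rfl⟩
    have ht' : 0 < t' := Nat.pos_of_mul_pos_left hn.1
    obtain ⟨s, ⟨hs1, hsm⟩, hsd⟩ := Nat.exists_modEq_mem_Icc hm d
    have hst' : s * t' ≡ r [MOD m] := (hsd.mul_right t').trans hn.2.2
    have hsS : s ∈ S := hS ▸ ⟨hs1, hsm, t', ht', hst'⟩
    obtain ⟨hts, -, hmin⟩ := ht s hsS
    exact ⟨s, hsS, mem_Aset_div_of_mul_mem hts (hmin t' ht' hst') hsd.symm hn⟩
  · rintro ⟨s, hsS, hd⟩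
    obtain ⟨hts, hst, -⟩ := ht s hsS
    exact ⟨d * t s, mul_mem_Aset hts hst hd, dvd_mul_right d _⟩

/-- Let `S` be the set of `s ∈ {1, …, m}` such that `s·t ≡ r (mod m)` for some
`t ≥ 1`, and for `s ∈ S` let `t s` be the minimal such `t`. Then
`⋃_{n ∈ A_{r,m}(x)} D(n) = ⋃_{s ∈ S} A_{s,m}(x / t(s))` for all `x ≥ 1`. -/
theorem union_divisors_Aset
    (r m : ℕ) (hr : 0 < r) (hm : 0 < m)
    (S : Set ℕ) (hS : S = {s | 1 ≤ s ∧ s ≤ m ∧ ∃ t, 1 ≤ t ∧ s * t ≡ r [MOD m]})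
    (t : ℕ → ℕ)
    (ht : ∀ s ∈ S, 1 ≤ t s ∧ s * t s ≡ r [MOD m] ∧
      ∀ t', 1 ≤ t' → s * t' ≡ r [MOD m] → t s ≤ t')
    (x : ℝ) (hx : 1 ≤ x) :
    (⋃ n ∈ Aset r m x, {d : ℕ | d ∣ n}) = ⋃ s ∈ S, Aset s m (x / t s) :=
  union_divisors_Aset_general r m hm S hS t ht x
end

section
/- For every sequence s = (s_n)_{n ≥ 1} in {-1, +1} and every integer n ≥ 5, the contribution of small primes to ℓ_s(n) is negligible: log ∏_{p ≤ n, p^v ∥ ℓ_s(n)} p^v = O(n² / log n), where the product ranges over primes p ≤ n and p^v ∥ ℓ_s(n) means p^v exactly divides ℓ_s(n); the implied constant is absolute. -/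
/-!
Every prime power `p ^ v` exactly dividing `ℓ_s(n)` divides one of the terms `F_k ± 1` with
`k ≤ n`, so `p ^ v ≤ 2 ^ n`. The product over the `π(n)` primes `p ≤ n` therefore has logarithm
at most `π(n) · n log 2`, and Chebyshev's bound `π(n) log n = O(n)` gives `O(n² / log n)`.
-/

open Real

/-- `ℓ_s(n) := lcm(F₅ + s₅, …, Fₙ + sₙ)`. -/
def shiftedLcm (s : ℕ → ℤ) (n : ℕ) : ℤ :=
  (Finset.Icc 5 n).lcm (fun k => (Nat.fib k : ℤ) + s k)

theorem Nat.fib_lt_two_pow (n : ℕ) : Nat.fib n < 2 ^ n := by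
  induction n using Nat.twoStepInduction with
  | zero => simp
  | one => simp
  | more n ih₀ ih₁ =>
    rw [pow_succ] at ih₁
    rw [Nat.fib_add_two, pow_succ, pow_succ]
    omega

theorem Int.natAbs_finsetLcm {ι : Type*} [DecidableEq ι] (s : Finset ι) (f : ι → ℤ) :
    (s.lcm f).natAbs = s.lcm fun i => (f i).natAbs := by
  induction s using Finset.induction with
  | empty => simp
  | insert a s _ ih =>
    rw [Finset.lcm_insert, Finset.lcm_insert, ← ih, lcm_eq_nat_lcm, ← Int.lcm_def,
      Int.natAbs_lcm]

theorem Finset.ordProj_lcm_le {ι : Type*} {s : Finset ι} {f : ι → ℕ} {B : ℕ}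
    (hf : ∀ i ∈ s, f i ≠ 0) (hB : ∀ i ∈ s, f i ≤ B) (hB₀ : 0 < B) (p : ℕ) :
    p ^ (s.lcm f).factorization p ≤ B := by
  rw [Finset.factorization_lcm hf]
  rcases s.eq_empty_or_nonempty with rfl | hs
  · simp only [Finset.sup_empty, bot_eq_zero, pow_zero]
    exact hB₀
  obtain ⟨i, hi, hsup⟩ := s.exists_mem_eq_sup hs fun i => (f i).factorization p
  rw [hsup]
  exact (Nat.ordProj_le p (hf i hi)).trans (hB i hi)

theorem ordProj_shiftedLcm_le {s : ℕ → ℤ} (hs : ∀ k, |s k| ≤ 1) (n p : ℕ) :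
    p ^ (shiftedLcm s n).natAbs.factorization p ≤ 2 ^ n := by
  rw [shiftedLcm, Int.natAbs_finsetLcm]
  have hterm : ∀ k ∈ Finset.Icc 5 n,
      ((Nat.fib k : ℤ) + s k).natAbs ≠ 0 ∧ ((Nat.fib k : ℤ) + s k).natAbs ≤ 2 ^ n := by
    intro k hk
    obtain ⟨h5k, hkn⟩ := Finset.mem_Icc.mp hk
    have hfib₅ : 5 ≤ Nat.fib k := (Nat.fib_mono h5k).trans' (by decide)
    have hfib : Nat.fib k < 2 ^ n :=
      (Nat.fib_lt_two_pow k).trans_le (Nat.pow_le_pow_right two_pos hkn)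
    obtain ⟨hs₁, hs₂⟩ := abs_le.mp (hs k)
    omega
  exact Finset.ordProj_lcm_le (fun k hk => (hterm k hk).1) (fun k hk => (hterm k hk).2)
    (by positivity) p

theorem abs_log_prod_ordProj_primesLE_le {N B : ℕ} (hB : ∀ p, p ^ N.factorization p ≤ B)
    (n : ℕ) :
    |log ((∏ p ∈ Nat.primesLE n, p ^ N.factorization p : ℕ) : ℝ)| ≤
      n.primeCounting * log B := by
  have hpos : 0 < ∏ p ∈ Nat.primesLE n, p ^ N.factorization p :=
    Finset.prod_pos fun p hp => pow_pos (Nat.prime_of_mem_primesLE hp).pos _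
  have hle := Finset.prod_le_pow_card (Nat.primesLE n) _ _ fun p _ => hB p
  rw [Nat.primesLE_card_eq_primeCounting] at hle
  rw [abs_of_nonneg (log_nonneg (by exact_mod_cast hpos)), ← log_pow]
  exact log_le_log (by exact_mod_cast hpos) (by exact_mod_cast hle)

theorem primeCounting_mul_log_le (n : ℕ) : n.primeCounting * log n ≤ 5 * n := by
  rcases Nat.lt_or_ge n 2 with hn | hn
  · interval_cases n <;> simp
  have hn₁ : (1 : ℝ) < n := by exact_mod_cast hn
  have hsqrt : 0 < log √n := log_pos (lt_sqrt_of_sq_lt (by simpa using hn₁))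
  have hlog : log n = 2 * log √n := by rw [log_sqrt (by positivity)]; ring
  have hpi := Chebyshev.pi_le_log4_mul_div hn₁
  rw [Nat.floor_natCast] at hpi
  -- `log √n ≤ √n - 1` bounds the error term `√n log n` by `2n`
  have herr : √n * log √n ≤ n := by
    have := log_le_sub_one_of_pos (sqrt_pos.mpr (by linarith : (0 : ℝ) < n))
    nlinarith [sq_sqrt (by linarith : (0 : ℝ) ≤ n), sqrt_nonneg (n : ℝ)]
  have hlog4 : log 4 ≤ 3 / 2 := by
    rw [show (4 : ℝ) = 2 ^ 2 by norm_num, log_pow]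
    have := log_two_lt_d9
    norm_num at this ⊢
    linarith
  calc n.primeCounting * log n
      ≤ (log 4 * n / log √n + √n) * (2 * log √n) := by rw [hlog]; gcongr
    _ = 2 * log 4 * n + 2 * (√n * log √n) := by field_simp
    _ ≤ 2 * (3 / 2) * n + 2 * n := by gcongr
    _ = 5 * n := by ring

/-- The contribution of the primes `p ≤ n` to `ℓ_s(n)` is negligible:
`log ∏_{p ≤ n, p^v ∥ ℓ_s(n)} p^v = O(n² / log n)`, with an absolute implied constant; here
`v = v_p(ℓ_s(n))` is the exact exponent of `p` in `ℓ_s(n)`. -/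
theorem log_small_prime_part_shiftedLcm :
    ∃ C : ℝ, 0 < C ∧ ∀ s : ℕ → ℤ, (∀ k, s k = 1 ∨ s k = -1) → ∀ n : ℕ, 5 ≤ n →
      |Real.log ((∏ p ∈ (Finset.range (n + 1)).filter Nat.Prime,
          p ^ ((shiftedLcm s n).natAbs.factorization p) : ℕ) : ℝ)| ≤
        C * (n : ℝ) ^ 2 / Real.log n := by
  refine ⟨5, by norm_num, fun s hs n hn => ?_⟩
  have hs₁ : ∀ k, |s k| ≤ 1 := fun k => by rcases hs k with h | h <;> simp [h]
  have hP := abs_log_prod_ordProj_primesLE_le (ordProj_shiftedLcm_le hs₁ n) n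
  have hlogn : 0 < log n := log_pos (by exact_mod_cast (by omega : 1 < n))
  have hlog2 : log 2 ≤ 1 := by linarith [log_two_lt_d9]
  rw [Nat.cast_pow, log_pow, Nat.cast_ofNat] at hP
  rw [show (Finset.range (n + 1)).filter Nat.Prime = Nat.primesLE n from rfl,
    le_div_iff₀ hlogn]
  calc _ ≤ n.primeCounting * (n * log 2) * log n := by gcongr
    _ = (n * log 2) * (n.primeCounting * log n) := by ring
    _ ≤ (n * 1) * (5 * n) :=
      mul_le_mul (by gcongr) (primeCounting_mul_log_le n) (by positivity) (by positivity)
    _ = 5 * (n : ℝ) ^ 2 := by ring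
end

section
/- Let (s_n)_{n ≥ 1} be a sequence of independent random variables, each uniformly distributed on {-1, +1}. Then for every integer n ≥ 5 and every integer d ≥ 6, the probability that d does not belong to M_s(n) equals 16^{−⌊n·gcd(2,d)/(2d)⌋}. -/
open MeasureTheory ProbabilityTheory

/-- `F_s(n)`: the set of integers `h ∈ [2, n/2]` such that `s_{2h−2} = (−1)^h`, or
`s_{2h−1} = (−1)^{h+1}`, or `s_{2h+1} = (−1)^{h+1}`, or `s_{2h+2} = (−1)^{h+1}`. -/
def Fset (s : ℕ → ℤ) (n : ℕ) : Finset ℕ :=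
  (Finset.Icc 2 n).filter (fun h => 2 * h ≤ n ∧
    (s (2 * h - 2) = (-1) ^ h ∨ s (2 * h - 1) = (-1) ^ (h + 1) ∨
      s (2 * h + 1) = (-1) ^ (h + 1) ∨ s (2 * h + 2) = (-1) ^ (h + 1)))

/-- `L_s(n)`: the set of integers `h ∈ [2, n/2]` such that `s_{2h−2} = (−1)^{h+1}`, or
`s_{2h−1} = (−1)^h`, or `s_{2h+1} = (−1)^h`, or `s_{2h+2} = (−1)^h`. -/
def Lset (s : ℕ → ℤ) (n : ℕ) : Finset ℕ :=
  (Finset.Icc 2 n).filter (fun h => 2 * h ≤ n ∧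
    (s (2 * h - 2) = (-1) ^ (h + 1) ∨ s (2 * h - 1) = (-1) ^ h ∨
      s (2 * h + 1) = (-1) ^ h ∨ s (2 * h + 2) = (-1) ^ h))

/-- `M_s(n) := (⋃_{h ∈ F_s(n)} D(h)) ∪ (⋃_{h ∈ L_s(n)} D′(h))`, where `D(h)` is the set of
divisors of `h` and `D′(h) = D(2h) \ D(h)`. -/
def Mset (s : ℕ → ℤ) (n : ℕ) : Finset ℕ :=
  (Fset s n).biUnion (fun h => h.divisors) ∪
    (Lset s n).biUnion (fun h => (2 * h).divisors \ h.divisors)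

/-!
Since `d ∣ h` implies `d ∣ 2h`, the event `d ∉ M_s(n)` says: for every `h ∈ [2, n/2]` with
`d ∣ 2h`, `h ∉ F_s(n)` if `d ∣ h` and `h ∉ L_s(n)` otherwise. Both conditions have the same
shape, and each pins the four signs at `2h−2, 2h−1, 2h+1, 2h+2` to one definite pattern.
The relevant `h` are the multiples of `e = d / gcd(2,d) ≥ 3` in `[1, n/2]`: there are
`⌊n·gcd(2,d)/(2d)⌋` of them, and `e ≥ 3` makes their windows of indices disjoint, so by
independence each of them contributes a factor `2⁻⁴`.
-/

open Finset

theorem Nat.dvd_mul_iff_div_gcd_dvd {a d h : ℕ} (ha : 0 < a) : d ∣ a * h ↔ d / a.gcd d ∣ h := by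
  have hg : 0 < a.gcd d := Nat.gcd_pos_of_pos_left d ha
  have hcop : (d / a.gcd d).Coprime (a / a.gcd d) := (Nat.coprime_div_gcd_div_gcd hg).symm
  calc d ∣ a * h ↔ a.gcd d * (d / a.gcd d) ∣ a.gcd d * (a / a.gcd d * h) := by
        rw [← mul_assoc, Nat.mul_div_cancel' (Nat.gcd_dvd_left a d),
          Nat.mul_div_cancel' (Nat.gcd_dvd_right a d)]
    _ ↔ d / a.gcd d ∣ h := by rw [Nat.mul_dvd_mul_iff_left hg, hcop.dvd_mul_left]

theorem Nat.le_mul_div_gcd {a d : ℕ} (ha : 0 < a) : d ≤ a * (d / a.gcd d) :=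
  calc d = a.gcd d * (d / a.gcd d) := (Nat.mul_div_cancel' (Nat.gcd_dvd_right a d)).symm
    _ ≤ a * (d / a.gcd d) := Nat.mul_le_mul_right _ (Nat.le_of_dvd ha (Nat.gcd_dvd_left a d))

theorem Int.ne_iff_eq_neg_of_eq_one_or_neg_one {a c : ℤ} (ha : a = 1 ∨ a = -1)
    (hc : c = 1 ∨ c = -1) : a ≠ c ↔ a = -c := by
  rcases ha with rfl | rfl <;> rcases hc with rfl | rfl <;> decide

section Independence

variable {Ω ι κ β : Type*} [MeasurableSpace Ω] [MeasurableSpace β] [MeasurableSingletonClass β]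
  {P : Measure Ω} {s : ι → Ω → β}

theorem ProbabilityTheory.iIndepFun.measure_forall_mem_forall_mem_eq_prod [DecidableEq ι]
    (hs : iIndepFun s P) {T : Finset κ} {c : κ → Finset ι} (hc : (T : Set κ).PairwiseDisjoint c)
    (v : κ → ι → β) :
    P {ω | ∀ k ∈ T, ∀ i ∈ c k, s i ω = v k i} = ∏ k ∈ T, ∏ i ∈ c k, P {ω | s i ω = v k i} := by
  -- the constraints on coordinate `i`, coming from whichever block contains it
  set A : ι → Set β := fun i => {b | ∀ k ∈ T, i ∈ c k → b = v k i}
  have hA : ∀ k ∈ T, ∀ i ∈ c k, A i = {v k i} := by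
    intro k hk i hi
    ext b
    refine ⟨fun hb => hb k hk hi, ?_⟩
    rintro rfl k' hk' hi'
    rw [hc.elim_finset hk' hk i hi' hi]
  have hAmeas : ∀ i, MeasurableSet (A i) := fun i => by
    simp only [A, Set.ofPred_forall]
    exact measurableSet_biInter _ fun k _ => MeasurableSet.iInter fun _ => measurableSet_eq
  have hevent : {ω | ∀ k ∈ T, ∀ i ∈ c k, s i ω = v k i} = ⋂ i ∈ T.biUnion c, s i ⁻¹' A i := by
    ext ω
    simp only [Set.mem_ofPred_eq, Set.mem_iInter, Set.mem_preimage, mem_biUnion, A]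
    grind
  rw [hevent, hs.measure_inter_preimage_eq_mul _ fun i _ => hAmeas i, prod_biUnion hc]
  exact prod_congr rfl fun k hk => prod_congr rfl fun i hi => by rw [hA k hk i hi]; rfl

end Independence

namespace Mset

def HitsWindow (t : ℕ → ℤ) (h : ℕ) (c : ℤ) : Prop :=
  t (2 * h - 2) = c ∨ t (2 * h - 1) = -c ∨ t (2 * h + 1) = -c ∨ t (2 * h + 2) = -c

def window (h : ℕ) : Finset ℕ := {2 * h - 2, 2 * h - 1, 2 * h + 1, 2 * h + 2}

def windowPattern (h : ℕ) (c : ℤ) (i : ℕ) : ℤ := if i = 2 * h - 2 then -c else c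

def windowSign (d h : ℕ) : ℤ := if d ∣ h then (-1) ^ h else -(-1) ^ h

def constrained (n d : ℕ) : Finset ℕ := {h ∈ Icc 2 (n / 2) | d ∣ 2 * h}

variable {t : ℕ → ℤ} {n d h : ℕ}

lemma mem_Icc_half_iff : (h ∈ Icc 2 n ∧ 2 * h ≤ n) ↔ h ∈ Icc 2 (n / 2) := by
  simp only [mem_Icc]; omega

lemma mem_Fset_iff : h ∈ Fset t n ↔ h ∈ Icc 2 (n / 2) ∧ HitsWindow t h ((-1) ^ h) := by
  rw [Fset, mem_filter, ← and_assoc, mem_Icc_half_iff, HitsWindow, pow_succ, mul_neg_one]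

lemma mem_Lset_iff : h ∈ Lset t n ↔ h ∈ Icc 2 (n / 2) ∧ HitsWindow t h (-(-1) ^ h) := by
  rw [Lset, mem_filter, ← and_assoc, mem_Icc_half_iff, HitsWindow, pow_succ, mul_neg_one, neg_neg]

lemma mem_iff : d ∈ Mset t n ↔ ∃ h ∈ constrained n d, HitsWindow t h (windowSign d h) := by
  simp only [Mset, mem_union, mem_biUnion, mem_sdiff, Nat.mem_divisors, mem_Fset_iff,
    mem_Lset_iff, constrained, mem_filter, mem_Icc]
  constructor
  · rintro (⟨h, ⟨hh, hit⟩, hdh, -⟩ | ⟨h, ⟨hh, hit⟩, ⟨hdh2, -⟩, hdh⟩)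
    · exact ⟨h, ⟨hh, dvd_mul_of_dvd_right hdh 2⟩, by rwa [windowSign, if_pos hdh]⟩
    · have hdh : ¬ d ∣ h := fun hdh' => hdh ⟨hdh', by omega⟩
      exact ⟨h, ⟨hh, hdh2⟩, by rwa [windowSign, if_neg hdh]⟩
  · rintro ⟨h, ⟨hh, hdh2⟩, hit⟩
    by_cases hdh : d ∣ h
    · rw [windowSign, if_pos hdh] at hit
      exact Or.inl ⟨h, ⟨hh, hit⟩, hdh, by omega⟩
    · rw [windowSign, if_neg hdh] at hit
      exact Or.inr ⟨h, ⟨hh, hit⟩, ⟨hdh2, by omega⟩, fun hdh' => hdh hdh'.1⟩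

lemma not_hitsWindow_iff {c : ℤ} (ht : ∀ k, t k = 1 ∨ t k = -1) (hc : c = 1 ∨ c = -1)
    (h1 : 1 ≤ h) : ¬ HitsWindow t h c ↔ ∀ i ∈ window h, t i = windowPattern h c i := by
  have hc' : -c = 1 ∨ -c = -1 := by rcases hc with rfl | rfl <;> simp
  simp only [HitsWindow, not_or, Int.ne_iff_eq_neg_of_eq_one_or_neg_one (ht _) hc,
    Int.ne_iff_eq_neg_of_eq_one_or_neg_one (ht _) hc', neg_neg, window, windowPattern,
    forall_mem_insert, mem_singleton, forall_eq, if_true]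
  rw [if_neg (by omega), if_neg (by omega), if_neg (by omega)]

lemma windowSign_eq_one_or_neg_one (d h : ℕ) : windowSign d h = 1 ∨ windowSign d h = -1 := by
  unfold windowSign
  split_ifs <;> rcases neg_one_pow_eq_or ℤ h with hh | hh <;> simp [hh]

lemma windowPattern_eq_one_or_neg_one {c : ℤ} (hc : c = 1 ∨ c = -1) (h i : ℕ) :
    windowPattern h c i = 1 ∨ windowPattern h c i = -1 := by
  unfold windowPattern
  split_ifs <;> rcases hc with rfl | rfl <;> simp

lemma two_le_of_mem_constrained (hh : h ∈ constrained n d) : 2 ≤ h :=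
  (mem_Icc.1 (mem_filter.1 hh).1).1

lemma not_mem_iff (ht : ∀ k, t k = 1 ∨ t k = -1) :
    d ∉ Mset t n ↔
      ∀ h ∈ constrained n d, ∀ i ∈ window h, t i = windowPattern h (windowSign d h) i := by
  rw [mem_iff, not_exists]
  refine forall_congr' fun h => not_and.trans (imp_congr_right fun hc => ?_)
  exact not_hitsWindow_iff ht (windowSign_eq_one_or_neg_one d h)
    (one_le_two.trans (two_le_of_mem_constrained hc))

lemma card_window (h1 : 1 ≤ h) : #(window h) = 4 := by
  rw [window, card_insert_of_notMem, card_insert_of_notMem, card_pair] <;> simp <;> omega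

lemma mem_constrained_iff (hd : 3 ≤ d) :
    h ∈ constrained n d ↔ h ∈ Ioc 0 (n / 2) ∧ d / Nat.gcd 2 d ∣ h := by
  have he : 2 ≤ d / Nat.gcd 2 d := by have := Nat.le_mul_div_gcd (a := 2) (d := d) two_pos; omega
  rw [constrained, mem_filter, Nat.dvd_mul_iff_div_gcd_dvd two_pos, mem_Icc, mem_Ioc]
  constructor
  · rintro ⟨⟨h2, hn⟩, hdvd⟩
    exact ⟨⟨by omega, hn⟩, hdvd⟩
  · rintro ⟨⟨h0, hn⟩, hdvd⟩
    exact ⟨⟨by linarith [Nat.le_of_dvd h0 hdvd], hn⟩, hdvd⟩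

lemma card_constrained (hd : 3 ≤ d) : #(constrained n d) = n * Nat.gcd 2 d / (2 * d) := by
  have hg : 0 < Nat.gcd 2 d := Nat.gcd_pos_of_pos_left d two_pos
  have h2d : 2 * d = 2 * (d / Nat.gcd 2 d) * Nat.gcd 2 d := by
    rw [mul_assoc, Nat.div_mul_cancel (Nat.gcd_dvd_right 2 d)]
  have hfilter : constrained n d = {h ∈ Ioc 0 (n / 2) | d / Nat.gcd 2 d ∣ h} := by
    ext h
    rw [mem_constrained_iff hd, mem_filter]
  rw [hfilter, Nat.Ioc_filter_dvd_card_eq_div, Nat.div_div_eq_div_mul, h2d,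
    Nat.mul_div_mul_right _ _ hg]

lemma pairwiseDisjoint_window (hd : 5 ≤ d) : (constrained n d : Set ℕ).PairwiseDisjoint window := by
  have he : 3 ≤ d / Nat.gcd 2 d := by have := Nat.le_mul_div_gcd (a := 2) (d := d) two_pos; omega
  intro h hh h' hh' hne
  wlog hlt : h < h' generalizing h h'
  · exact (this hh' hh hne.symm (by omega)).symm
  rw [mem_coe, mem_constrained_iff (by omega)] at hh hh'
  have hgap : d / Nat.gcd 2 d ≤ h' - h :=
    Nat.le_of_dvd (by omega) (Nat.dvd_sub hh'.2 hh.2)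
  rw [Function.onFun, disjoint_left]
  intro i hi hi'
  simp only [window, mem_insert, mem_singleton] at hi hi'
  omega

lemma measure_not_mem_eq_prod {Ω : Type*} [MeasurableSpace Ω] {P : Measure Ω} {s : ℕ → Ω → ℤ}
    (hval : ∀ k ω, s k ω = 1 ∨ s k ω = -1) (hindep : iIndepFun s P) (hd : 5 ≤ d) :
    P {ω | d ∉ Mset (fun k => s k ω) n} = ∏ h ∈ constrained n d, ∏ i ∈ window h,
      P {ω | s i ω = windowPattern h (windowSign d h) i} := by
  have hevent : {ω | d ∉ Mset (fun k => s k ω) n} =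
      {ω | ∀ h ∈ constrained n d, ∀ i ∈ window h, s i ω = windowPattern h (windowSign d h) i} :=
    Set.ext fun ω => not_mem_iff (hval · ω)
  rw [hevent, hindep.measure_forall_mem_forall_mem_eq_prod (pairwiseDisjoint_window hd)]

end Mset

theorem prob_not_mem_Mset_general
    {Ω : Type*} [MeasurableSpace Ω] (P : Measure Ω)
    (s : ℕ → Ω → ℤ)
    (hval : ∀ n ω, s n ω = 1 ∨ s n ω = -1)
    (hunif : ∀ n, P {ω | s n ω = 1} = 1 / 2 ∧ P {ω | s n ω = -1} = 1 / 2)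
    (hindep : iIndepFun s P)
    (n d : ℕ) (hd : 6 ≤ d) :
    P {ω | d ∉ Mset (fun k => s k ω) n} =
      ((16 : ENNReal) ^ (n * Nat.gcd 2 d / (2 * d)))⁻¹ := by
  have hhalf : ∀ h i, P {ω | s i ω = Mset.windowPattern h (Mset.windowSign d h) i} = 2⁻¹ :=
    fun h i => by
      rcases Mset.windowPattern_eq_one_or_neg_one (Mset.windowSign_eq_one_or_neg_one d h) h i
        with hv | hv <;> simp [hv, hunif i]
  rw [Mset.measure_not_mem_eq_prod hval hindep (by omega)]
  calc _ = ∏ h ∈ Mset.constrained n d, (2⁻¹ : ENNReal) ^ 4 := prod_congr rfl fun h hh => by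
        rw [prod_congr rfl fun i _ => hhalf h i, prod_const,
          Mset.card_window (one_le_two.trans (Mset.two_le_of_mem_constrained hh))]
    _ = _ := by
      rw [prod_const, Mset.card_constrained (by omega), ← ENNReal.inv_pow (n := 4),
        ← ENNReal.inv_pow]
      norm_num

/-- If `(sₙ)` are independent random signs, uniformly distributed on
`{-1, +1}`, then for `n ≥ 5` and `d ≥ 6` the probability that `d ∉ M_s(n)` equals
`16^{−⌊n·gcd(2,d)/(2d)⌋}`. -/
theorem prob_not_mem_Mset
    {Ω : Type*} [MeasurableSpace Ω] (P : Measure Ω) [IsProbabilityMeasure P]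
    (s : ℕ → Ω → ℤ) (hmeas : ∀ n, Measurable (s n))
    (hval : ∀ n ω, s n ω = 1 ∨ s n ω = -1)
    (hunif : ∀ n, P {ω | s n ω = 1} = 1 / 2 ∧ P {ω | s n ω = -1} = 1 / 2)
    (hindep : iIndepFun s P)
    (n d : ℕ) (hn : 5 ≤ n) (hd : 6 ≤ d) :
    P {ω | d ∉ Mset (fun k => s k ω) n} =
      ((16 : ENNReal) ^ (n * Nat.gcd 2 d / (2 * d)))⁻¹ :=
  prob_not_mem_Mset_general P s hval hunif hindep n d hd
end
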